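/- For each k ≥ 2, the pair α_L = (-1)^L a^{kL} q^{kL² + L(L-1)/2} (1 - a q^{2L}) (a;q)_L / ((1-a)(q;q)_L) and β_L = Σ_{L ≥ n₁ ≥ ⋯ ≥ n_{k-1} ≥ 0} a^{n₁+⋯+n_{k-1}} q^{n₁²+⋯+n_{k-1}²} / ((q;q)_{L-n₁} (q;q)_{n₁-n₂} ⋯ (q;q)_{n_{k-1}}) is a Bailey pair relative to a. -/

import Mathlib

/-!
Starting from the unit Bailey pair `(α⁰, δ₀)`, where `α⁰` is the `k = 0` case of the stated `α`,
one applies `k` times the Bailey lemma in its limiting form `ρ₁, ρ₂ → ∞`: if `(α, β)` is a Bailey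
pair, then so is `(a^r q^{r²} α_r, ∑_n a^n q^{n²} β_n / (q;q)_{L-n})`. Multiplying `α` by
`a^r q^{r²}` raises `k` by one, and unfolding the `k` nested sums over `β` gives the sum over chains
`L ≥ n₁ ≥ ⋯ ≥ n_{k-1} ≥ 0`. After exchanging the order of summation, the Bailey lemma comes down to
the finite identity `∑_m q^{m²} b^m / ((q;q)_{M-m} (q;q)_m (bq;q)_m) = 1 / ((q;q)_M (bq;q)_M)`,
which is proved by induction on `M` using the `q`-Pascal relation. The unit pair follows from a
closed form of its partial sums.
-/

/-- Finite q-shifted factorial `(x;q)_n`. -/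
noncomputable def qp (q x : ℂ) (n : ℕ) : ℂ := ∏ k ∈ Finset.range n, (1 - x * q ^ k)

/-- Extend a tuple `n : Fin m → ℕ` by zero. -/
def ext {m : ℕ} (n : Fin m → ℕ) (i : ℕ) : ℕ := if h : i < m then n ⟨i, h⟩ else 0

section

open Finset

theorem qp_zero (q x : ℂ) : qp q x 0 = 1 := prod_range_zero _

theorem qp_succ (q x : ℂ) (n : ℕ) : qp q x (n + 1) = qp q x n * (1 - x * q ^ n) :=
  prod_range_succ _ _

theorem qp_succ' (q x : ℂ) (n : ℕ) : qp q x (n + 1) = (1 - x) * qp q (x * q) n := by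
  simp only [qp, prod_range_succ', pow_succ', pow_zero, mul_one, mul_assoc, mul_comm, mul_left_comm]

theorem qp_add (q x : ℂ) (m n : ℕ) : qp q x (m + n) = qp q x m * qp q (x * q ^ m) n := by
  simp only [qp, prod_range_add, pow_add, mul_assoc]

section QPochhammer

variable {q x : ℂ} {n : ℕ}

theorem one_sub_ne_zero_of_qp_succ (h : qp q x (n + 1) ≠ 0) : 1 - x ≠ 0 :=
  left_ne_zero_of_mul (qp_succ' q x n ▸ h)

theorem one_sub_mul_pow_ne_zero_of_qp_succ (h : qp q x (n + 1) ≠ 0) : 1 - x * q ^ n ≠ 0 :=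
  right_ne_zero_of_mul (qp_succ q x n ▸ h)

theorem qp_mul_ne_zero_of_qp_succ (h : qp q x (n + 1) ≠ 0) : qp q (x * q) n ≠ 0 :=
  right_ne_zero_of_mul (qp_succ' q x n ▸ h)

theorem qp_self_ne_zero (hq : ‖q‖ < 1) (n : ℕ) : qp q q n ≠ 0 := by
  refine prod_ne_zero_iff.mpr fun j _ hj => ?_
  have hlt : ‖q * q ^ j‖ < 1 := by
    rw [← pow_succ', norm_pow]
    exact pow_lt_one₀ (norm_nonneg q) hq (Nat.succ_ne_zero j)
  rw [← sub_eq_zero.mp hj, norm_one] at hlt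
  exact hlt.false

end QPochhammer

section Durfee

variable {q : ℂ}

noncomputable def durfeeTerm (q b : ℂ) (M m : ℕ) : ℂ :=
  q ^ m ^ 2 * b ^ m / (qp q q (M - m) * qp q q m * qp q (b * q) m)

theorem one_sub_pow_mul_durfeeTerm_succ (hq : ∀ n, qp q q n ≠ 0) (b : ℂ) {M m : ℕ}
    (hm : m ≤ M) :
    (1 - q ^ (M + 1 - m)) * durfeeTerm q b (M + 1) m = durfeeTerm q b M m := by
  have hqM := one_sub_mul_pow_ne_zero_of_qp_succ (hq (M - m + 1))
  rw [durfeeTerm, durfeeTerm, Nat.sub_add_comm hm, qp_succ, pow_succ']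
  field_simp

theorem pow_mul_durfeeTerm_succ_succ (hq : ∀ n, qp q q n ≠ 0) {b : ℂ} (hb : ∀ n, qp q (b * q) n ≠ 0)
    {M j : ℕ} (hj : j ≤ M) :
    q ^ (M - j) * (1 - q ^ (j + 1)) * durfeeTerm q b (M + 1) (j + 1)
      = b * q ^ (M + 1) / (1 - b * q) * durfeeTerm q (b * q) M j := by
  have hqj := one_sub_mul_pow_ne_zero_of_qp_succ (hq (j + 1))
  have hbq : 1 - b * q ≠ 0 := one_sub_ne_zero_of_qp_succ (hb 1)
  obtain ⟨d, rfl⟩ := Nat.exists_eq_add_of_le hj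
  rw [durfeeTerm, durfeeTerm, Nat.add_sub_add_right, Nat.add_sub_cancel_left, qp_succ q q j,
    qp_succ' q (b * q) j]
  field_simp
  ring

/-- The limit `ρ₁, ρ₂ → ∞` of the `q`-Pfaff–Saalschütz sum. -/
theorem durfee_identity (hq : ∀ n, qp q q n ≠ 0) (M : ℕ) (b : ℂ)
    (hb : ∀ n, qp q (b * q) n ≠ 0) :
    ∑ m ∈ range (M + 1), durfeeTerm q b M m = 1 / (qp q q M * qp q (b * q) M) := by
  induction M generalizing b with
  | zero => simp [durfeeTerm, qp_zero]
  | succ M ih =>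
    have hbq : ∀ n, qp q (b * q * q) n ≠ 0 := fun n => qp_mul_ne_zero_of_qp_succ (hb (n + 1))
    have hpascal : ∀ m ≤ M + 1,
        (1 : ℂ) - q ^ (M + 1) = (1 - q ^ (M + 1 - m)) + q ^ (M + 1 - m) * (1 - q ^ m) := by
      intro m hm
      rw [mul_sub, ← pow_add, Nat.sub_add_cancel hm]
      ring
    have hsplit : (1 - q ^ (M + 1)) * ∑ m ∈ range (M + 2), durfeeTerm q b (M + 1) m
        = ∑ m ∈ range (M + 1), durfeeTerm q b M m
          + b * q ^ (M + 1) / (1 - b * q) * ∑ m ∈ range (M + 1), durfeeTerm q (b * q) M m := by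
      rw [mul_sum, sum_congr rfl fun m hm => by
        rw [hpascal m (Nat.lt_succ_iff.mp (mem_range.mp hm)), add_mul], sum_add_distrib]
      congr 1
      · rw [sum_range_succ, Nat.sub_self, pow_zero, sub_self, zero_mul, add_zero]
        exact sum_congr rfl fun m hm =>
          one_sub_pow_mul_durfeeTerm_succ hq b (Nat.lt_succ_iff.mp (mem_range.mp hm))
      · rw [sum_range_succ', pow_zero, sub_self, mul_zero, zero_mul, add_zero, mul_sum]
        refine sum_congr rfl fun j hj => ?_
        rw [Nat.add_sub_add_right]
        exact pow_mul_durfeeTerm_succ_succ hq hb (Nat.lt_succ_iff.mp (mem_range.mp hj))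
    have hqM := one_sub_mul_pow_ne_zero_of_qp_succ (hq (M + 1))
    have hbqM := one_sub_mul_pow_ne_zero_of_qp_succ (hb (M + 1))
    have hbq1 : 1 - b * q ≠ 0 := one_sub_ne_zero_of_qp_succ (hb 1)
    have hshift : qp q (b * q * q) M = qp q (b * q) M * (1 - b * q * q ^ M) / (1 - b * q) := by
      rw [eq_div_iff hbq1, mul_comm, ← qp_succ', qp_succ]
    rw [← mul_right_inj' (pow_succ' q M ▸ hqM), hsplit, ih b hb, ih (b * q) hbq, hshift,
      qp_succ q q M, qp_succ q (b * q) M]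
    field_simp
    ring

theorem durfee_identity_shift (hq : ∀ n, qp q q n ≠ 0) {a : ℂ} (ha : ∀ n, qp q (a * q) n ≠ 0)
    (r M : ℕ) :
    ∑ m ∈ range (M + 1),
        a ^ (r + m) * q ^ (r + m) ^ 2 / (qp q q (M - m) * qp q q m * qp q (a * q) (2 * r + m))
      = a ^ r * q ^ r ^ 2 / (qp q q M * qp q (a * q) (2 * r + M)) := by
  have hsplit : ∀ n, qp q (a * q) (2 * r + n)
      = qp q (a * q) (2 * r) * qp q (a * q ^ (2 * r) * q) n := by
    intro n
    rw [qp_add, mul_right_comm]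
  have hb : ∀ n, qp q (a * q ^ (2 * r) * q) n ≠ 0 :=
    fun n => right_ne_zero_of_mul (hsplit n ▸ ha (2 * r + n))
  have hterm : ∀ m, a ^ (r + m) * q ^ (r + m) ^ 2
        / (qp q q (M - m) * qp q q m * qp q (a * q) (2 * r + m))
      = a ^ r * q ^ r ^ 2 / qp q (a * q) (2 * r) * durfeeTerm q (a * q ^ (2 * r)) M m := by
    intro m
    rw [durfeeTerm, hsplit]
    field_simp
    ring
  rw [sum_congr rfl fun m _ => hterm m, ← mul_sum, durfee_identity hq M _ hb, hsplit]
  field_simp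

end Durfee

def IsBaileyPair (q a : ℂ) (α β : ℕ → ℂ) : Prop :=
  ∀ L, β L = ∑ r ∈ range (L + 1), α r / (qp q q (L - r) * qp q (a * q) (L + r))

noncomputable def baileyTransform (q a : ℂ) (β : ℕ → ℂ) (L : ℕ) : ℂ :=
  ∑ n ∈ range (L + 1), a ^ n * q ^ n ^ 2 * β n / qp q q (L - n)

theorem IsBaileyPair.baileyTransform {q a : ℂ} {α β : ℕ → ℂ} (hq : ∀ n, qp q q n ≠ 0)
    (ha : ∀ n, qp q (a * q) n ≠ 0) (h : IsBaileyPair q a α β) :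
    IsBaileyPair q a (fun r => a ^ r * q ^ r ^ 2 * α r) (baileyTransform q a β) := by
  intro L
  have hterm : ∀ n ∈ range (L + 1), a ^ n * q ^ n ^ 2 * β n / qp q q (L - n)
      = ∑ r ∈ range (n + 1), α r * (a ^ (r + (n - r)) * q ^ (r + (n - r)) ^ 2
          / (qp q q (L - (r + (n - r))) * qp q q (n - r) * qp q (a * q) (2 * r + (n - r)))) := by
    intro n _
    rw [h n, mul_sum, sum_div]
    refine sum_congr rfl fun r hr => ?_
    have hrn : r ≤ n := Nat.lt_succ_iff.mp (mem_range.mp hr)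
    rw [Nat.add_sub_cancel' hrn, show 2 * r + (n - r) = n + r by omega]
    ring
  rw [_root_.baileyTransform, sum_congr rfl hterm, sum_range_diag_flip (L + 1) fun r j =>
    α r * (a ^ (r + j) * q ^ (r + j) ^ 2
      / (qp q q (L - (r + j)) * qp q q j * qp q (a * q) (2 * r + j)))]
  refine sum_congr rfl fun r hr => ?_
  have hrL : r ≤ L := Nat.lt_succ_iff.mp (mem_range.mp hr)
  simp_rw [← Nat.sub_sub]
  rw [← mul_sum, Nat.sub_add_comm hrL, durfee_identity_shift hq ha r (L - r),
    show 2 * r + (L - r) = L + r by omega]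
  ring

noncomputable def baileyAlpha (q a : ℂ) (k r : ℕ) : ℂ :=
  (-1) ^ r * a ^ (k * r) * q ^ (k * r ^ 2 + r * (r - 1) / 2) *
    (1 - a * q ^ (2 * r)) * qp q a r / ((1 - a) * qp q q r)

section UnitPair

variable {q a : ℂ}

theorem baileyAlpha_succ (k r : ℕ) :
    baileyAlpha q a (k + 1) r = a ^ r * q ^ r ^ 2 * baileyAlpha q a k r := by
  simp only [baileyAlpha, add_mul, one_mul, pow_add]
  ring

/-- The factor `1 - q ^ (L - n)` vanishes at `n = L`. -/
theorem sum_range_baileyAlpha_zero (hq : ∀ n, qp q q n ≠ 0) (ha : a ≠ 1)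
    (haq : ∀ n, qp q (a * q) n ≠ 0) {L : ℕ} (hL : L ≠ 0) {n : ℕ} (hn : n ≤ L) :
    ∑ r ∈ range (n + 1), baileyAlpha q a 0 r / (qp q q (L - r) * qp q (a * q) (L + r))
      = (-1) ^ n * q ^ (n + 1).choose 2 * qp q (a * q) n * (1 - q ^ (L - n))
        / ((1 - q ^ L) * qp q q n * qp q q (L - n) * qp q (a * q) (L + n)) := by
  have ha' : 1 - a ≠ 0 := sub_ne_zero.mpr ha.symm
  have hqL : 1 - q ^ L ≠ 0 := by
    obtain ⟨l, rfl⟩ := Nat.exists_eq_succ_of_ne_zero hL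
    exact pow_succ' q l ▸ one_sub_mul_pow_ne_zero_of_qp_succ (hq (l + 1))
  induction n with
  | zero =>
    simp only [zero_add, sum_range_one, baileyAlpha, zero_mul, pow_zero, mul_one, zero_tsub,
      mul_zero, Nat.zero_div, one_mul, qp_zero, tsub_zero, add_zero, Nat.choose_succ_self]
    field_simp
  | succ n ih =>
    obtain ⟨s, rfl⟩ := Nat.exists_eq_add_of_le hn
    have hqs := one_sub_mul_pow_ne_zero_of_qp_succ (hq (s + 1))
    have hqn := one_sub_mul_pow_ne_zero_of_qp_succ (hq (n + 1))
    have haqL := one_sub_mul_pow_ne_zero_of_qp_succ (haq (n + 1 + s + n + 1))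
    rw [sum_range_succ, ih (by omega), show n + 1 + s - n = s + 1 by omega,
      Nat.add_sub_cancel_left, show n + 1 + s + (n + 1) = n + 1 + s + n + 1 by omega,
      baileyAlpha, ← Nat.choose_two_right, Nat.choose_succ_succ' (n + 1) 1,
      Nat.choose_one_right, qp_succ q q s, qp_succ q q n, qp_succ q (a * q) n,
      qp_succ q (a * q) (n + 1 + s + n), qp_succ' q a n]
    field_simp
    ring

theorem isBaileyPair_baileyAlpha_zero (hq : ∀ n, qp q q n ≠ 0) (ha : a ≠ 1)
    (haq : ∀ n, qp q (a * q) n ≠ 0) :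
    IsBaileyPair q a (baileyAlpha q a 0) fun L => if L = 0 then 1 else 0 := by
  intro L
  rcases eq_or_ne L 0 with rfl | hL
  · simp [baileyAlpha, qp_zero, sub_ne_zero.mpr ha.symm]
  · rw [sum_range_baileyAlpha_zero hq ha haq hL le_rfl, Nat.sub_self, pow_zero,
      sub_self, mul_zero, zero_div]
    exact if_neg hL

theorem isBaileyPair_baileyAlpha (hq : ∀ n, qp q q n ≠ 0) (ha : a ≠ 1)
    (haq : ∀ n, qp q (a * q) n ≠ 0) (k : ℕ) :
    IsBaileyPair q a (baileyAlpha q a k)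
      ((baileyTransform q a)^[k] fun L => if L = 0 then 1 else 0) := by
  induction k with
  | zero => exact isBaileyPair_baileyAlpha_zero hq ha haq
  | succ k ih =>
    rw [Function.iterate_succ_apply']
    convert ih.baileyTransform hq haq using 1
    exact funext (baileyAlpha_succ k)

end UnitPair

end

section Chains

theorem ext_cons_zero {m : ℕ} (x : ℕ) (v : Fin m → ℕ) :
    ext (Fin.cons x v : Fin (m + 1) → ℕ) 0 = x :=
  rfl

theorem ext_cons_succ {m : ℕ} (x : ℕ) (v : Fin m → ℕ) (i : ℕ) :
    ext (Fin.cons x v : Fin (m + 1) → ℕ) (i + 1) = ext v i := by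
  unfold ext
  by_cases h : i < m
  · rw [dif_pos (by omega), dif_pos h]
    exact Fin.cons_succ (α := fun _ => ℕ) x v ⟨i, h⟩
  · rw [dif_neg (by omega), dif_neg h]

theorem Antitone.le_ext_zero {m : ℕ} {v : Fin m → ℕ} (hv : Antitone v) (i : Fin m) :
    v i ≤ ext v 0 := by
  rw [ext, dif_pos i.pos]
  exact hv (Nat.zero_le _)

theorem antitone_cons_iff {m : ℕ} (x : ℕ) (v : Fin m → ℕ) :
    Antitone (Fin.cons x v : Fin (m + 1) → ℕ) ↔ Antitone v ∧ ext v 0 ≤ x := by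
  refine ⟨fun h => ⟨fun s t hst => ?_, ?_⟩, fun ⟨hv, hx⟩ => ?_⟩
  · simpa using h (Fin.succ_le_succ_iff.mpr hst)
  · unfold ext
    split_ifs with hm
    · have h0 := h (Fin.zero_le (Fin.succ ⟨0, hm⟩))
      rwa [Fin.cons_succ, Fin.cons_zero] at h0
    · exact Nat.zero_le x
  · intro s t hst
    induction t using Fin.cases with
    | zero => rw [Fin.le_zero_iff.mp hst]
    | succ j =>
      induction s using Fin.cases with
      | zero => simpa using (hv.le_ext_zero j).trans hx
      | succ i => simpa using hv (Fin.succ_le_succ_iff.mp hst)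

variable (q a : ℂ)

noncomputable def chainTerm (L : ℕ) {m : ℕ} (n : Fin m → ℕ) : ℂ :=
  if Antitone n ∧ ext n 0 ≤ L then
    a ^ (∑ s, n s) * q ^ (∑ s, (n s) ^ 2) /
      (qp q q (L - ext n 0) * ∏ i ∈ Finset.range m, qp q q (ext n i - ext n (i + 1)))
  else 0

theorem chainTerm_cons (L x : ℕ) {m : ℕ} (v : Fin m → ℕ) :
    chainTerm q a L (Fin.cons x v : Fin (m + 1) → ℕ)
      = (if x ≤ L then a ^ x * q ^ x ^ 2 / qp q q (L - x) else 0) * chainTerm q a x v := by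
  simp only [chainTerm, antitone_cons_iff, ext_cons_zero, Fin.sum_univ_succ, Fin.cons_succ,
    Fin.cons_zero, Finset.prod_range_succ', ext_cons_succ]
  by_cases hx : x ≤ L
  · by_cases hv : Antitone v ∧ ext v 0 ≤ x
    · rw [if_pos ⟨hv, hx⟩, if_pos hx, if_pos hv, pow_add, pow_add]
      ring
    · rw [if_neg fun h => hv h.1, if_neg hv, mul_zero]
  · rw [if_neg fun h => hx h.2, if_neg hx, zero_mul]

theorem chainTerm_eq_zero_of_notMem {L m : ℕ} {n : Fin m → ℕ}
    (hn : n ∉ Fintype.piFinset fun _ => Finset.range (L + 1)) : chainTerm q a L n = 0 := by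
  refine if_neg fun ⟨hanti, hL⟩ => hn (Fintype.mem_piFinset.mpr fun i => ?_)
  exact Finset.mem_range.mpr (Nat.lt_succ_of_le ((hanti.le_ext_zero i).trans hL))

theorem summable_chainTerm (L m : ℕ) : Summable (chainTerm q a L : (Fin m → ℕ) → ℂ) :=
  summable_of_ne_finset_zero fun _ hn => chainTerm_eq_zero_of_notMem q a hn

theorem tsum_chainTerm (m L : ℕ) :
    ∑' n : Fin m → ℕ, chainTerm q a L n
      = (baileyTransform q a)^[m + 1] (fun L => if L = 0 then 1 else 0) L := by
  induction m generalizing L with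
  | zero =>
    rw [(hasSum_unique _).tsum_eq]
    simp [chainTerm, baileyTransform, ext, Subsingleton.antitone, ite_div, Finset.sum_ite_eq']
  | succ m ih =>
    have hsum := (Equiv.summable_iff (Fin.consEquiv fun _ : Fin (m + 1) => ℕ)).mpr
      (summable_chainTerm q a L (m + 1))
    rw [← (Fin.consEquiv fun _ => ℕ).tsum_eq]
    have hcons (p : ℕ × (Fin m → ℕ)) :
        (Fin.consEquiv fun _ : Fin (m + 1) => ℕ) p = Fin.cons p.1 p.2 := rfl
    refine (hsum.tsum_prod' fun x => ?_).trans ?_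
    · simp only [Function.comp_apply, hcons, chainTerm_cons]
      exact (summable_chainTerm q a x m).mul_left _
    · simp only [Function.comp_apply, hcons, chainTerm_cons, tsum_mul_left, ih]
      rw [tsum_eq_sum (s := Finset.range (L + 1)) fun x hx => ?_,
        Function.iterate_succ_apply' (baileyTransform q a) (m + 1), baileyTransform]
      · refine Finset.sum_congr rfl fun x hx => ?_
        rw [if_pos (Nat.lt_succ_iff.mp (Finset.mem_range.mp hx))]
        ring
      · rw [if_neg fun h => hx (Finset.mem_range.mpr (Nat.lt_succ_of_le h)), zero_mul]

end Chains

theorem iterated_bailey_pair_general (q a : ℂ) (hq1 : ‖q‖ < 1) (ha : a ≠ 1)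
    (haq : ∀ n, qp q (a * q) n ≠ 0) (k : ℕ) (hk : 2 ≤ k) (L : ℕ) :
    (∑' n : Fin (k - 1) → ℕ,
        if (∀ s t : Fin (k - 1), s ≤ t → n t ≤ n s) ∧ ext n 0 ≤ L then
          a ^ (∑ s, n s) * q ^ (∑ s, (n s) ^ 2) /
            (qp q q (L - ext n 0) *
              ∏ i ∈ Finset.range (k - 1), qp q q (ext n i - ext n (i + 1)))
        else 0) =
      ∑ r ∈ Finset.range (L + 1),
        ((-1) ^ r * a ^ (k * r) * q ^ (k * r ^ 2 + r * (r - 1) / 2) *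
            (1 - a * q ^ (2 * r)) * qp q a r / ((1 - a) * qp q q r)) /
          (qp q q (L - r) * qp q (a * q) (L + r)) := by
  have hchain := tsum_chainTerm q a (k - 1) L
  rw [Nat.sub_add_cancel (by omega : 1 ≤ k),
    isBaileyPair_baileyAlpha (qp_self_ne_zero hq1) ha haq k L] at hchain
  exact hchain

/-- the `k`-fold iterated Bailey pair relative to `a`. -/
theorem iterated_bailey_pair (q a : ℂ) (hq0 : 0 < ‖q‖) (hq1 : ‖q‖ < 1) (ha : a ≠ 1)
    (haq : ∀ n, qp q (a * q) n ≠ 0) (k : ℕ) (hk : 2 ≤ k) (L : ℕ) :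
    (∑' n : Fin (k - 1) → ℕ,
        if (∀ s t : Fin (k - 1), s ≤ t → n t ≤ n s) ∧ ext n 0 ≤ L then
          a ^ (∑ s, n s) * q ^ (∑ s, (n s) ^ 2) /
            (qp q q (L - ext n 0) *
              ∏ i ∈ Finset.range (k - 1), qp q q (ext n i - ext n (i + 1)))
        else 0) =
      ∑ r ∈ Finset.range (L + 1),
        ((-1) ^ r * a ^ (k * r) * q ^ (k * r ^ 2 + r * (r - 1) / 2) *
            (1 - a * q ^ (2 * r)) * qp q a r / ((1 - a) * qp q q r)) /
          (qp q q (L - r) * qp q (a * q) (L + r)) :=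
  iterated_bailey_pair_general q a hq1 ha haq k hk L
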